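/- arXiv:2309.10169 — 5 statements merged into one kernel-verified Lean document; each statement's English description precedes it below -/
import Mathlib

section
/- Let R be a Frobenius algebra with Nakayama automorphism ν. Then the class of ν in Out(R) = Aut(R)/Inn(R) lies in the center of Out(R). -/
/-!
Any two Frobenius forms `λ, λ'` of `R` differ by a unit: `λ' = λ(· u)`, and then the Nakayama
automorphism of `λ'` is `u ν u⁻¹`. Applied to `λ' = λ ∘ β`, whose Nakayama automorphism is
`β⁻¹ ν β`, this gives `β⁻¹ ν β = u ν u⁻¹`, i.e. `ν β` and `β ν` agree up to an inner automorphism.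
-/

variable {K R : Type*} [CommSemiring K] [Semiring R] [Algebra K R]

def IsFrobeniusForm (lam : Module.Dual K R) : Prop :=
  Function.Bijective fun a : R => (LinearMap.mulRight K a).dualMap lam

namespace IsFrobeniusForm

variable {lam lam' : Module.Dual K R}

theorem eq_of_forall_mul_eq (hlam : IsFrobeniusForm lam) {b b' : R}
    (h : ∀ x, lam (x * b) = lam (x * b')) : b = b' :=
  hlam.injective <| LinearMap.ext h

theorem exists_forall_mul_eq (hlam : IsFrobeniusForm lam) (μ : Module.Dual K R) :
    ∃ d : R, ∀ x, lam (x * d) = μ x := by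
  obtain ⟨d, hd⟩ := hlam.surjective μ
  exact ⟨d, LinearMap.ext_iff.mp hd⟩

theorem comp_algEquiv (hlam : IsFrobeniusForm lam) (β : R ≃ₐ[K] R) :
    IsFrobeniusForm (lam.comp β.toLinearMap) := by
  have hcomp : (fun a : R => (LinearMap.mulRight K a).dualMap (lam.comp β.toLinearMap)) =
      β.toLinearEquiv.dualMap ∘ (fun a : R => (LinearMap.mulRight K a).dualMap lam) ∘ β := by
    funext a
    ext x
    simp
  rw [IsFrobeniusForm, hcomp]
  exact β.toLinearEquiv.dualMap.bijective.comp (hlam.comp β.bijective)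

theorem exists_unit_forall_eq_mul (hlam : IsFrobeniusForm lam) (hlam' : IsFrobeniusForm lam') :
    ∃ u : Rˣ, ∀ x, lam' x = lam (x * u) := by
  obtain ⟨d, hd⟩ := hlam.exists_forall_mul_eq lam'
  obtain ⟨e, he⟩ := hlam'.exists_forall_mul_eq lam
  have hed : e * d = 1 := hlam.eq_of_forall_mul_eq fun x => by
    rw [← mul_assoc, hd, he, mul_one]
  have hde : d * e = 1 := hlam'.eq_of_forall_mul_eq fun x => by
    rw [← mul_assoc, he, hd, mul_one]
  exact ⟨⟨d, e, hde, hed⟩, fun x => (hd x).symm⟩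

theorem nakayama_unique (hlam : IsFrobeniusForm lam) {σ τ : R → R}
    (hσ : ∀ a r, lam (a * r) = lam (r * σ a)) (hτ : ∀ a r, lam (a * r) = lam (r * τ a))
    (a : R) : σ a = τ a :=
  hlam.eq_of_forall_mul_eq fun r => by rw [← hσ, hτ]

end IsFrobeniusForm

theorem nakayama_mul_unit {lam : Module.Dual K R} {ν : R → R}
    (hν : ∀ a r, lam (a * r) = lam (r * ν a)) (u : Rˣ) (a r : R) :
    lam (a * r * u) = lam (r * (u * ν a * ↑u⁻¹) * u) := by
  simp only [mul_assoc, Units.inv_mul, mul_one]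
  rw [hν, mul_assoc]

theorem nakayama_comp_algEquiv {lam : Module.Dual K R} {ν : R → R}
    (hν : ∀ a r, lam (a * r) = lam (r * ν a)) (β : R ≃ₐ[K] R) (a r : R) :
    lam (β (a * r)) = lam (β (r * β.symm (ν (β a)))) := by
  rw [map_mul β, map_mul β, β.apply_symm_apply, hν]

theorem stmt8_general (K R : Type) [Field K] [Ring R] [Algebra K R]
    (lam : Module.Dual K R)
    (hFrob : Function.Bijective fun a : R => (LinearMap.mulRight K a).dualMap lam)
    (ν : R ≃ₐ[K] R)
    (hν : ∀ a r : R, lam (a * r) = lam (r * ν a)) :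
    ∀ β : R ≃ₐ[K] R, ∃ u : Rˣ, ∀ r : R, ν (β r) = ↑u⁻¹ * β (ν r) * ↑u := by
  intro β
  have hFrobβ : IsFrobeniusForm (lam.comp β.toLinearMap) :=
    IsFrobeniusForm.comp_algEquiv hFrob β
  obtain ⟨u, hu⟩ := IsFrobeniusForm.exists_unit_forall_eq_mul hFrob hFrobβ
  have hconj (a : R) : β.symm (ν (β a)) = u * ν a * ↑u⁻¹ :=
    hFrobβ.nakayama_unique (τ := fun a => u * ν a * ↑u⁻¹) (nakayama_comp_algEquiv hν β)
      (fun a r => by rw [hu, hu]; exact nakayama_mul_unit hν u a r) a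
  refine ⟨(Units.map β.toMonoidHom u)⁻¹, fun r => ?_⟩
  rw [inv_inv, ← β.apply_symm_apply (ν (β r)), hconj]
  simp [map_mul]

/-- Let `R` be a Frobenius algebra with Frobenius form `lam`
(`a ↦ a ⇀ lam` bijective, `(a ⇀ lam)(s) = lam (s * a)`) and associated Nakayama
automorphism `ν` (`lam (a * r) = lam (r * ν a)`). Then the class of `ν` in
`Out(R) = Aut(R)/Inn(R)` lies in the center of `Out(R)`: for every algebra
automorphism `β` of `R`, the automorphisms `ν ∘ β` and `β ∘ ν` agree up to an inner
automorphism. -/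
theorem stmt8 (K R : Type) [Field K] [Ring R] [Algebra K R] [FiniteDimensional K R]
    (lam : Module.Dual K R)
    (hFrob : Function.Bijective fun a : R => (LinearMap.mulRight K a).dualMap lam)
    (ν : R ≃ₐ[K] R)
    (hν : ∀ a r : R, lam (a * r) = lam (r * ν a)) :
    ∀ β : R ≃ₐ[K] R, ∃ u : Rˣ, ∀ r : R, ν (β r) = ↑u⁻¹ * β (ν r) * ↑u :=
  stmt8_general K R lam hFrob ν hν
end

section
/- Let K be a field, q ∈ K*, and R_q = K⟨x,y⟩/(x², y², yx − qxy). Let ν be the automorphism with ν(x) = q^{-1}x, ν(y) = qy. If t is a positive integer with q^t ≠ 1, then ν^t is not an inner automorphism of R_q. Consequently, the order of [R_q*] in Pic(R_q) equals the multiplicative order of q in K* (infinite if q is not a root of unity). -/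
/-!
Write `u = a₀ + a₁x + a₂y + a₃xy`. The constant coefficient `a₀` is multiplicative, so it is
nonzero on units, and the `y`-coefficients of `u * y` and `y * u` are both `a₀`. If `ν^t` is
conjugation by `u`, then `u * ν^t(y) = y * u` with `ν^t(y) = q^t y`, so comparing `y`-coefficients
gives `q^t a₀ = a₀`, i.e. `q^t = 1`. Conversely, if `q^t = 1` then `ν^t` fixes the generators
`x` and `y`, hence is the identity.
-/

open Module

theorem AlgEquiv.pow_apply_eq_pow_smul {K R : Type*} [CommSemiring K] [Semiring R] [Algebra K R]
    (f : R ≃ₐ[K] R) {c : K} {a : R} (h : f a = c • a) (n : ℕ) : (f ^ n) a = c ^ n • a := by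
  induction n with
  | zero => simp
  | succ n ih => rw [pow_succ', AlgEquiv.mul_apply, ih, map_smul, h, smul_smul, ← pow_succ]

namespace QuantumExterior

variable {K R : Type*} [Field K] [Ring R] [Algebra K R]

structure IsStandardBasis (q : K) (x y : R) (b : Basis (Fin 4) K R) : Prop where
  x_mul_x : x * x = 0
  y_mul_y : y * y = 0
  y_mul_x : y * x = q • (x * y)
  basis_zero : b 0 = 1
  basis_one : b 1 = x
  basis_two : b 2 = y
  basis_three : b 3 = x * y

/-- Structure constants of `R_q` in the basis `1, x, y, xy`. -/
def mulCoeffs (q : K) (a c : Fin 4 → K) : Fin 4 → K :=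
  ![a 0 * c 0, a 0 * c 1 + a 1 * c 0, a 0 * c 2 + a 2 * c 0,
    a 0 * c 3 + a 1 * c 2 + q * a 2 * c 1 + a 3 * c 0]

variable {q : K} {x y : R} {b : Basis (Fin 4) K R}

namespace IsStandardBasis

theorem sum_mul_sum (hb : IsStandardBasis q x y b) (a c : Fin 4 → K) :
    (∑ i, a i • b i) * (∑ i, c i • b i) = ∑ i, mulCoeffs q a c i • b i := by
  obtain ⟨hx, hy, hyx, hb0, hb1, hb2, hb3⟩ := hb
  have hx_xy : x * (x * y) = 0 := by rw [← mul_assoc, hx, zero_mul]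
  have hxy_x : x * y * x = 0 := by rw [mul_assoc, hyx, mul_smul_comm, hx_xy, smul_zero]
  have hxy_y : x * y * y = 0 := by rw [mul_assoc, hy, mul_zero]
  have hy_xy : y * (x * y) = 0 := by rw [← mul_assoc, hyx, smul_mul_assoc, hxy_y, smul_zero]
  have hxy_xy : x * y * (x * y) = 0 := by rw [mul_assoc, hy_xy, mul_zero]
  simp only [Fin.sum_univ_four, hb0, hb1, hb2, hb3, mulCoeffs, Matrix.cons_val, add_mul,
    mul_add, smul_mul_smul_comm, one_mul, mul_one, hx, hy, hyx, hx_xy, hxy_x, hxy_y, hy_xy,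
    hxy_xy, smul_zero, add_zero, smul_smul]
  module

theorem repr_mul (hb : IsStandardBasis q x y b) (r s : R) :
    ⇑(b.repr (r * s)) = mulCoeffs q (b.repr r) (b.repr s) := by
  conv_lhs => rw [← b.sum_repr r, ← b.sum_repr s, hb.sum_mul_sum, b.repr_sum_self]

theorem repr_unit_zero_ne_zero (hb : IsStandardBasis q x y b) (u : Rˣ) : b.repr u 0 ≠ 0 := by
  intro h0
  have h := congrFun (hb.repr_mul u ↑u⁻¹) 0
  rw [Units.mul_inv, ← hb.basis_zero, b.repr_self, Finsupp.single_eq_same] at h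
  simp [mulCoeffs, h0] at h

theorem eq_one_of_unit_mul_smul_eq (hb : IsStandardBasis q x y b) (u : Rˣ) {c : K}
    (h : u * (c • y) = y * u) : c = 1 := by
  have hy_repr : b.repr y = Finsupp.single 2 1 := by rw [← hb.basis_two, b.repr_self]
  rw [mul_smul_comm] at h
  have h2 : c * b.repr u 0 = b.repr u 0 := by
    simpa [hb.repr_mul, mulCoeffs, hy_repr] using congrArg (b.repr · 2) h
  exact (mul_eq_right₀ (hb.repr_unit_zero_ne_zero u)).mp h2

theorem algEquiv_eq_one (hb : IsStandardBasis q x y b) (e : R ≃ₐ[K] R) (hex : e x = x)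
    (hey : e y = y) : e = 1 := by
  have : e.toLinearMap = LinearMap.id := b.ext fun i => by
    fin_cases i <;> simp [hb.basis_zero, hb.basis_one, hb.basis_two, hb.basis_three, hex, hey]
  exact AlgEquiv.ext fun r => LinearMap.congr_fun this r

end IsStandardBasis

end QuantumExterior

theorem stmt10_general (K : Type) [Field K] (q : K)
    (R : Type) [Ring R] [Algebra K R]
    (x y : R) (hx : x * x = 0) (hy : y * y = 0) (hyx : y * x = q • (x * y))
    (b : Module.Basis (Fin 4) K R)
    (hb0 : b 0 = 1) (hb1 : b 1 = x) (hb2 : b 2 = y) (hb3 : b 3 = x * y)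
    (ν : R ≃ₐ[K] R) (hνx : ν x = q⁻¹ • x) (hνy : ν y = q • y) :
    ∀ t : ℕ, 0 < t →
      ((∃ u : Rˣ, ∀ r : R, (ν ^ t) r = ↑u⁻¹ * r * ↑u) ↔ q ^ t = 1) := by
  have hb : QuantumExterior.IsStandardBasis q x y b := ⟨hx, hy, hyx, hb0, hb1, hb2, hb3⟩
  intro t _
  have hνtx := ν.pow_apply_eq_pow_smul hνx t
  have hνty := ν.pow_apply_eq_pow_smul hνy t
  constructor
  · rintro ⟨u, hu⟩
    refine hb.eq_one_of_unit_mul_smul_eq u ?_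
    rw [← hνty, hu, mul_assoc, Units.mul_inv_cancel_left]
  · intro hqt
    have hνt : ν ^ t = 1 := hb.algEquiv_eq_one _
      (by rw [hνtx, inv_pow, hqt, inv_one, one_smul]) (by rw [hνty, hqt, one_smul])
    exact ⟨1, fun r => by simp [hνt]⟩

/-- Let `K` be a field, `q ∈ K*`, `R_q = K⟨x,y⟩/(x², y², yx − qxy)` (a
4-dimensional algebra with basis `{1, x, y, xy}`), and let `ν` be the (Nakayama)
automorphism with `ν x = q⁻¹ • x`, `ν y = q • y`. If `t` is a positive integer with
`q^t ≠ 1`, then `ν^t` is not an inner automorphism of `R_q`; and conversely `ν^t` is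
inner when `q^t = 1`. Consequently the order of `[R_q*]` in `Pic(R_q)` — which equals
the order of the class of `ν` in `Out(R_q)` — is the multiplicative order of `q`
(infinite if `q` is not a root of unity). -/
theorem stmt10 (K : Type) [Field K] (q : K) (hq : q ≠ 0)
    (R : Type) [Ring R] [Algebra K R]
    (x y : R) (hx : x * x = 0) (hy : y * y = 0) (hyx : y * x = q • (x * y))
    (b : Module.Basis (Fin 4) K R)
    (hb0 : b 0 = 1) (hb1 : b 1 = x) (hb2 : b 2 = y) (hb3 : b 3 = x * y)
    (ν : R ≃ₐ[K] R) (hνx : ν x = q⁻¹ • x) (hνy : ν y = q • y) :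
    ∀ t : ℕ, 0 < t →
      ((∃ u : Rˣ, ∀ r : R, (ν ^ t) r = ↑u⁻¹ * r * ↑u) ↔ q ^ t = 1) :=
  stmt10_general K q R x y hx hy hyx b hb0 hb1 hb2 hb3 ν hνx hνy
end

section
/- Let R be a finite dimensional K-algebra and ψ : R* ⊗_R R* → R an associative morphism of R-bimodules. Then the semitrivial extension A = R ⋉_ψ R* is a symmetric algebra: the map Φ : A → A*, Φ(r, r*)(s, s*) = r*(s) + s*(r), is an isomorphism of A-bimodules. -/
/-- The multiplication of the semitrivial extension `R ⋉_ψ R*`: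
`(r, f)(s, g) = (r s + ψ(f ⊗ g), r ⇀ g + f ↼ s)`, where the bimodule morphism
`ψ : R* ⊗_R R* → R` is encoded by the balanced bilinear pairing `p`, and
`(r ⇀ g)(t) = g (t * r)`, `(f ↼ s)(t) = f (s * t)`. -/
def stMul (K R : Type) [Field K] [Ring R] [Algebra K R]
    (p : Module.Dual K R →ₗ[K] Module.Dual K R →ₗ[K] R)
    (a b : R × Module.Dual K R) : R × Module.Dual K R :=
  (a.1 * b.1 + p a.2 b.2,
    (LinearMap.mulRight K a.1).dualMap b.2 + (LinearMap.mulLeft K b.1).dualMap a.2)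

/-- The map `Φ : A → A*`, `Φ(r, f)(s, g) = f s + g r`, for `A = R ⋉_ψ R*`. -/
def Phi (K R : Type) [Field K] [Ring R] [Algebra K R]
    (a : R × Module.Dual K R) : Module.Dual K (R × Module.Dual K R) where
  toFun b := a.2 b.1 + b.2 a.1
  map_add' b c := by
    simp only [Prod.fst_add, Prod.snd_add, map_add, LinearMap.add_apply]
    ring
  map_smul' k b := by
    simp only [Prod.smul_fst, Prod.smul_snd, map_smul, LinearMap.smul_apply,
      smul_eq_mul, RingHom.id_apply]
    ring

/-!
`Φ(a)(b) = a.2 b.1 + b.2 a.1` is a symmetric bilinear form on `A = R ⋉_ψ R*`, and it is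
nondegenerate: pairing `a` against `(0, g)` and `(s, 0)` recovers `a.1` and `a.2`, so `Φ` is
injective, hence bijective by dimension count. Bimodule compatibility of `Φ` amounts to
invariance of the form, `Φ(x a)(b) = Φ(a)(b x)`; expanding, all terms cancel except
`b.2 (ψ(x.2 ⊗ a.2)) = a.2 (ψ(b.2 ⊗ x.2))`, which is associativity of `ψ` at `s = 1`.
The other invariance follows from this one by symmetry of the form.
-/

namespace SemitrivialExtension

variable {K R : Type} [Field K] [Ring R] [Algebra K R]

@[simp]
theorem Phi_apply (a b : R × Module.Dual K R) : Phi K R a b = a.2 b.1 + b.2 a.1 := rfl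

theorem Phi_comm (a b : R × Module.Dual K R) : Phi K R a b = Phi K R b a :=
  add_comm _ _

variable (K R) in
def phiLinear : (R × Module.Dual K R) →ₗ[K] Module.Dual K (R × Module.Dual K R) where
  toFun := Phi K R
  map_add' a b := by
    ext c <;> simp
  map_smul' k a := by
    ext c <;> simp

theorem Phi_injective : Function.Injective (Phi K R) := by
  change Function.Injective (phiLinear K R)
  rw [← LinearMap.ker_eq_bot, LinearMap.ker_eq_bot']
  intro a ha
  have hfst : a.1 = 0 := by
    rw [← Module.forall_dual_apply_eq_zero_iff K]
    intro g
    simpa [phiLinear] using LinearMap.congr_fun ha (0, g)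
  have hsnd : a.2 = 0 := by
    ext s
    simpa [phiLinear] using LinearMap.congr_fun ha (s, 0)
  exact Prod.ext hfst hsnd

theorem Phi_bijective [FiniteDimensional K R] : Function.Bijective (Phi K R) := by
  have hdim : Module.finrank K (R × Module.Dual K R)
      = Module.finrank K (Module.Dual K (R × Module.Dual K R)) :=
    Subspace.dual_finrank_eq.symm
  exact ⟨Phi_injective, (LinearMap.injective_iff_surjective_of_finrank_eq_finrank
    (f := phiLinear K R) hdim).mp Phi_injective⟩

variable {p : Module.Dual K R →ₗ[K] Module.Dual K R →ₗ[K] R}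

theorem Phi_stMul_left (hcyc : ∀ f g h : Module.Dual K R, h (p f g) = f (p g h))
    (x a b : R × Module.Dual K R) :
    Phi K R (stMul K R p x a) b = Phi K R a (stMul K R p b x) := by
  simp only [Phi_apply, stMul, map_add, LinearMap.add_apply, LinearMap.dualMap_apply',
    LinearMap.comp_apply, LinearMap.mulRight_apply, LinearMap.mulLeft_apply, hcyc b.2 x.2 a.2]
  ring

theorem Phi_stMul_right (hcyc : ∀ f g h : Module.Dual K R, h (p f g) = f (p g h))
    (a x b : R × Module.Dual K R) :
    Phi K R (stMul K R p a x) b = Phi K R a (stMul K R p x b) := by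
  rw [Phi_comm a, Phi_stMul_left hcyc x b a, Phi_comm]

end SemitrivialExtension

theorem stmt12_general (K R : Type) [Field K] [Ring R] [Algebra K R] [FiniteDimensional K R]
    (p : Module.Dual K R →ₗ[K] Module.Dual K R →ₗ[K] R)
    (hassoc : ∀ (f g h : Module.Dual K R) (s : R), h (s * p f g) = f (p g h * s)) :
    (∀ a b : R × Module.Dual K R, Phi K R (a + b) = Phi K R a + Phi K R b) ∧
    Function.Bijective (Phi K R) ∧
    (∀ x a b : R × Module.Dual K R,
      Phi K R (stMul K R p x a) b = Phi K R a (stMul K R p b x)) ∧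
    (∀ a x b : R × Module.Dual K R,
      Phi K R (stMul K R p a x) b = Phi K R a (stMul K R p x b)) := by
  have hcyc : ∀ f g h : Module.Dual K R, h (p f g) = f (p g h) := fun f g h => by
    simpa using hassoc f g h 1
  open SemitrivialExtension in
  exact ⟨(phiLinear K R).map_add, Phi_bijective, Phi_stMul_left hcyc, Phi_stMul_right hcyc⟩

/-- Let `R` be a finite dimensional algebra and `ψ : R* ⊗_R R* → R` an
associative morphism of `R`-bimodules (encoded by the pairing `p` as in the
hypotheses). Then the semitrivial extension `A = R ⋉_ψ R*` is a symmetric algebra: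
the map `Φ : A → A*`, `Φ(r, f)(s, g) = f s + g r`, is an isomorphism of `A`-bimodules,
i.e. it is additive, bijective, and satisfies `Φ(x · a) = x ⇀ Φ(a)` and
`Φ(a · x) = Φ(a) ↼ x` (written pointwise using the multiplication `stMul` of `A`). -/
theorem stmt12 (K R : Type) [Field K] [Ring R] [Algebra K R] [FiniteDimensional K R]
    (p : Module.Dual K R →ₗ[K] Module.Dual K R →ₗ[K] R)
    (hbal : ∀ (r : R) (f g : Module.Dual K R),
      p ((LinearMap.mulLeft K r).dualMap f) g = p f ((LinearMap.mulRight K r).dualMap g))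
    (hleft : ∀ (r : R) (f g : Module.Dual K R),
      p ((LinearMap.mulRight K r).dualMap f) g = r * p f g)
    (hright : ∀ (f g : Module.Dual K R) (r : R),
      p f ((LinearMap.mulLeft K r).dualMap g) = p f g * r)
    (hassoc : ∀ (f g h : Module.Dual K R) (s : R), h (s * p f g) = f (p g h * s)) :
    (∀ a b : R × Module.Dual K R, Phi K R (a + b) = Phi K R a + Phi K R b) ∧
    Function.Bijective (Phi K R) ∧
    (∀ x a b : R × Module.Dual K R,
      Phi K R (stMul K R p x a) b = Phi K R a (stMul K R p b x)) ∧
    (∀ a x b : R × Module.Dual K R,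
      Phi K R (stMul K R p a x) b = Phi K R a (stMul K R p x b)) :=
  stmt12_general K R p hassoc
end

section
/- Let R be a finite dimensional algebra such that R* ⊗_R R* ≅ R as R-bimodules. If some isomorphism of R-bimodules ψ : R* ⊗_R R* → R is associative (ψ(r*⊗s*) ⇀ t* = r* ↼ ψ(s*⊗t*)), then every R-bimodule isomorphism R* ⊗_R R* → R is associative. -/
/-!
Since `ψ₀` is universal for balanced maps, the values `ψ₀ (f ⊗ g)` span `R`. A map `e` that is
left and right `R`-linear on a spanning set is a bimodule endomorphism of `R`, hence
multiplication by the central element `c = e 1`, and such a factor moves freely through the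
associativity identity of `ψ₀`.
-/

open Module

theorem Submodule.span_eq_top_of_forall_eq_zero {K P : Type*} [CommRing K] [AddCommGroup P]
    [Module K P] {s : Set P}
    (h : ∀ φ : P →ₗ[K] P ⧸ span K s, (∀ y ∈ s, φ y = 0) → φ = 0) : span K s = ⊤ := by
  have hmkQ : (span K s).mkQ = 0 :=
    h _ fun y hy => by simpa using subset_span hy
  rw [← ker_mkQ (span K s), hmkQ, LinearMap.ker_zero]

section Bimodule

variable {K R : Type*} [CommRing K] [Ring R] [Algebra K R]

theorem LinearMap.map_mul_left_of_span_eq_top {s : Set R} (hs : Submodule.span K s = ⊤)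
    (e : R →ₗ[K] R) (he : ∀ r, ∀ y ∈ s, e (r * y) = r * e y) (r x : R) :
    e (r * x) = r * e x :=
  LinearMap.congr_fun (LinearMap.ext_on (f := e ∘ₗ LinearMap.mulLeft K r)
    (g := LinearMap.mulLeft K r ∘ₗ e) hs fun y hy => he r y hy) x

theorem LinearMap.map_mul_right_of_span_eq_top {s : Set R} (hs : Submodule.span K s = ⊤)
    (e : R →ₗ[K] R) (he : ∀ r, ∀ y ∈ s, e (y * r) = e y * r) (x r : R) :
    e (x * r) = e x * r :=
  LinearMap.congr_fun (LinearMap.ext_on (f := e ∘ₗ LinearMap.mulRight K r)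
    (g := LinearMap.mulRight K r ∘ₗ e) hs fun y hy => he r y hy) x

theorem LinearMap.exists_central_eq_mul_of_bimodule (e : R →ₗ[K] R)
    (hL : ∀ r x, e (r * x) = r * e x) (hR : ∀ x r, e (x * r) = e x * r) :
    ∃ c : R, (∀ x, c * x = x * c) ∧ ∀ x, e x = c * x := by
  have hright : ∀ x, e x = e 1 * x := fun x => by simpa using hR 1 x
  have hleft : ∀ x, e x = x * e 1 := fun x => by simpa using hL x 1
  exact ⟨e 1, fun x => (hright x).symm.trans (hleft x), hright⟩

/-- Associativity `ψ(f ⊗ g) ⇀ h = f ↼ ψ(g ⊗ h)` of a pairing `ψ : R* × R* → R`. -/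
def IsAssocPairing (ψ : Dual K R → Dual K R → R) : Prop :=
  ∀ (f g h : Dual K R) (s : R), h (s * ψ f g) = f (ψ g h * s)

theorem IsAssocPairing.mul_central {ψ : Dual K R → Dual K R → R} (hψ : IsAssocPairing ψ)
    {c : R} (hc : ∀ x, c * x = x * c) : IsAssocPairing fun f g => c * ψ f g := by
  intro f g h s
  calc h (s * (c * ψ f g)) = h ((s * c) * ψ f g) := by rw [mul_assoc]
    _ = f (ψ g h * (s * c)) := hψ f g h (s * c)
    _ = f ((c * ψ g h) * s) := by rw [← hc s, ← mul_assoc, ← hc]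

end Bimodule

theorem stmt14_general (K R : Type) [Field K] [Ring R] [Algebra K R]
    (p₀ : Module.Dual K R →ₗ[K] Module.Dual K R →ₗ[K] R)
    (huniv : ∀ (M : Type) [AddCommGroup M] [Module K M]
        (b : Module.Dual K R →ₗ[K] Module.Dual K R →ₗ[K] M),
        (∀ (r : R) (f g : Module.Dual K R),
          b ((LinearMap.mulLeft K r).dualMap f) g
            = b f ((LinearMap.mulRight K r).dualMap g)) →
        ∃! h : R →ₗ[K] M, ∀ f g : Module.Dual K R, b f g = h (p₀ f g))
    (hassoc : ∀ (f g h : Module.Dual K R) (s : R), h (s * p₀ f g) = f (p₀ g h * s)) :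
    ∀ e : R →ₗ[K] R, Function.Bijective e →
      (∀ (r : R) (f g : Module.Dual K R), e (r * p₀ f g) = r * e (p₀ f g)) →
      (∀ (f g : Module.Dual K R) (r : R), e (p₀ f g * r) = e (p₀ f g) * r) →
      ∀ (f g h : Module.Dual K R) (s : R), h (s * e (p₀ f g)) = f (e (p₀ g h) * s) := by
  intro e _ heL heR
  have hspan : Submodule.span K {y | ∃ f g, p₀ f g = y} = ⊤ :=
    Submodule.span_eq_top_of_forall_eq_zero fun φ hφ =>
      (huniv _ 0 fun _ _ _ => rfl).unique (fun f g => (hφ _ ⟨f, g, rfl⟩).symm)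
        (fun f g => by simp)
  have hL := e.map_mul_left_of_span_eq_top hspan fun r _ ⟨f, g, hy⟩ => hy ▸ heL r f g
  have hR := e.map_mul_right_of_span_eq_top hspan fun r _ ⟨f, g, hy⟩ => hy ▸ heR f g r
  obtain ⟨c, hc, hec⟩ := e.exists_central_eq_mul_of_bimodule hL hR
  simp only [hec]
  exact IsAssocPairing.mul_central (ψ := fun f g => p₀ f g) hassoc hc

/-- Let `R` be a finite dimensional algebra with `R* ⊗_R R* ≅ R` as
`R`-bimodules. The isomorphism is encoded by a balanced bilinear pairing `p₀`
(corresponding to a bimodule morphism `ψ₀ : R* ⊗_R R* → R`) which is a morphism of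
left and right modules and satisfies the universal property of the tensor product
(so the induced map `R* ⊗_R R* → R` is bijective). If `ψ₀` is associative, then every
`R`-bimodule isomorphism `R* ⊗_R R* → R` is associative; every such isomorphism is of
the form `e ∘ ψ₀` for a bijective linear map `e : R → R` compatible with the bimodule
structure on the image of `p₀`, and the conclusion states that all such compositions
are associative. Here `(a ⇀ f)(s) = f (s * a)` and `(f ↼ a)(s) = f (a * s)`. -/
theorem stmt14 (K R : Type) [Field K] [Ring R] [Algebra K R] [FiniteDimensional K R]
    (p₀ : Module.Dual K R →ₗ[K] Module.Dual K R →ₗ[K] R)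
    (hbal : ∀ (r : R) (f g : Module.Dual K R),
      p₀ ((LinearMap.mulLeft K r).dualMap f) g = p₀ f ((LinearMap.mulRight K r).dualMap g))
    (hleft : ∀ (r : R) (f g : Module.Dual K R),
      p₀ ((LinearMap.mulRight K r).dualMap f) g = r * p₀ f g)
    (hright : ∀ (f g : Module.Dual K R) (r : R),
      p₀ f ((LinearMap.mulLeft K r).dualMap g) = p₀ f g * r)
    (huniv : ∀ (M : Type) [AddCommGroup M] [Module K M]
        (b : Module.Dual K R →ₗ[K] Module.Dual K R →ₗ[K] M),
        (∀ (r : R) (f g : Module.Dual K R),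
          b ((LinearMap.mulLeft K r).dualMap f) g
            = b f ((LinearMap.mulRight K r).dualMap g)) →
        ∃! h : R →ₗ[K] M, ∀ f g : Module.Dual K R, b f g = h (p₀ f g))
    (hassoc : ∀ (f g h : Module.Dual K R) (s : R), h (s * p₀ f g) = f (p₀ g h * s)) :
    ∀ e : R →ₗ[K] R, Function.Bijective e →
      (∀ (r : R) (f g : Module.Dual K R), e (r * p₀ f g) = r * e (p₀ f g)) →
      (∀ (f g : Module.Dual K R) (r : R), e (p₀ f g * r) = e (p₀ f g) * r) →
      ∀ (f g h : Module.Dual K R) (s : R), h (s * e (p₀ f g)) = f (e (p₀ g h) * s) :=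
  stmt14_general K R p₀ huniv hassoc
end

section
/- Let R be a Frobenius algebra such that R* ⊗_R R* ≅ R as R-bimodules (equivalently, the class [R*] has order at most 2 in Pic(R)). Then every R-bimodule isomorphism ψ : R* ⊗_R R* → R is associative, i.e., ψ(r*⊗s*) ⇀ t* = r* ↼ ψ(s*⊗t*) for all r*, s*, t* ∈ R*. -/
/-!
Since `lam` is a Frobenius form, every functional is `lam ↼ a`, and the Nakayama automorphism `ν`,
`lam (x * a) = lam (ν a * x)`, moves `⇀` across: `r ⇀ (lam ↼ a) = lam ↼ (ν r * a)`. Balancedness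
and the bimodule axioms then force `ψ (lam ↼ a) (lam ↼ b) = e * (ν a * b)` with `e = ψ lam lam`,
and `r * e = e * ν (ν r)`. By the universal property the values of `ψ` span `R`, so `x ↦ e * x`
is onto, hence injective as `R` is finite dimensional, and this gives `ν e = e`. Associativity is
then a direct computation with `lam (x * y) = lam (ν y * x)`. Finally a bimodule endomorphism of
`R` is multiplication by a central element, which reduces the second claim to the first.
-/

local notation:100 f:100 " ↼ " a:101 => LinearMap.dualMap (LinearMap.mulLeft _ a) f
local notation:100 a:101 " ⇀ " f:100 => LinearMap.dualMap (LinearMap.mulRight _ a) f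

namespace FrobeniusForm

variable {K R : Type} [Field K] [Ring R] [Algebra K R]

def dualMulLeft (lam : Module.Dual K R) : R →ₗ[K] Module.Dual K R :=
  (LinearMap.mul K R).compr₂ lam

def dualMulRight (lam : Module.Dual K R) : R →ₗ[K] Module.Dual K R :=
  (LinearMap.mul K R).flip.compr₂ lam

@[simp] theorem dualMulLeft_apply (lam : Module.Dual K R) (a : R) :
    dualMulLeft lam a = lam ↼ a := rfl

@[simp] theorem dualMulRight_apply (lam : Module.Dual K R) (a : R) :
    dualMulRight lam a = a ⇀ lam := rfl

theorem dualMap_mulLeft_one (f : Module.Dual K R) : f ↼ 1 = f := by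
  ext x
  simp

variable {lam : Module.Dual K R}

theorem dualMulLeft_injective (hFrob : Function.Surjective fun a : R => a ⇀ lam) :
    Function.Injective (dualMulLeft lam) := by
  rw [← LinearMap.ker_eq_bot, LinearMap.ker_eq_bot']
  intro a ha
  rw [← Module.forall_dual_apply_eq_zero_iff K a]
  intro φ
  obtain ⟨x, rfl⟩ := hFrob φ
  simpa using LinearMap.congr_fun ha x

theorem dualMulLeft_bijective [FiniteDimensional K R]
    (hFrob : Function.Bijective fun a : R => a ⇀ lam) : Function.Bijective (dualMulLeft lam) :=
  have hinj := dualMulLeft_injective hFrob.2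
  ⟨hinj, (LinearMap.injective_iff_surjective_of_finrank_eq_finrank
    Subspace.dual_finrank_eq.symm).mp hinj⟩

theorem eq_of_apply_mul_eq (hFrob : Function.Surjective fun a : R => a ⇀ lam) {a b : R}
    (h : ∀ x, lam (a * x) = lam (b * x)) : a = b :=
  dualMulLeft_injective hFrob (LinearMap.ext h)

variable [FiniteDimensional K R] (hFrob : Function.Bijective fun a : R => a ⇀ lam)

noncomputable def nakayamaLinearEquiv : R ≃ₗ[K] R :=
  (LinearEquiv.ofBijective (dualMulRight lam) hFrob).trans
    (LinearEquiv.ofBijective (dualMulLeft lam) (dualMulLeft_bijective hFrob)).symm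

theorem apply_mul_eq_apply_nakayamaLinearEquiv_mul (x a : R) :
    lam (x * a) = lam (nakayamaLinearEquiv hFrob a * x) := by
  have h := (LinearEquiv.ofBijective (dualMulLeft lam)
    (dualMulLeft_bijective hFrob)).apply_symm_apply (dualMulRight lam a)
  exact (LinearMap.congr_fun h x).symm

theorem nakayamaLinearEquiv_one : nakayamaLinearEquiv hFrob 1 = 1 :=
  eq_of_apply_mul_eq hFrob.2 fun x => by
    rw [← apply_mul_eq_apply_nakayamaLinearEquiv_mul, mul_one, one_mul]

theorem nakayamaLinearEquiv_mul (a b : R) :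
    nakayamaLinearEquiv hFrob (a * b) =
      nakayamaLinearEquiv hFrob a * nakayamaLinearEquiv hFrob b := by
  set ν := nakayamaLinearEquiv hFrob
  refine eq_of_apply_mul_eq hFrob.2 fun x => ?_
  calc lam (ν (a * b) * x) = lam (x * a * b) := by
        rw [← apply_mul_eq_apply_nakayamaLinearEquiv_mul, mul_assoc]
    _ = lam (ν a * (ν b * x)) := by
        rw [apply_mul_eq_apply_nakayamaLinearEquiv_mul, ← mul_assoc,
          apply_mul_eq_apply_nakayamaLinearEquiv_mul]
    _ = lam (ν a * ν b * x) := by rw [mul_assoc]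

noncomputable def nakayama : R ≃ₐ[K] R :=
  AlgEquiv.ofLinearEquiv (nakayamaLinearEquiv hFrob) (nakayamaLinearEquiv_one hFrob)
    (nakayamaLinearEquiv_mul hFrob)

theorem apply_mul_eq_apply_nakayama_mul (x a : R) : lam (x * a) = lam (nakayama hFrob a * x) :=
  apply_mul_eq_apply_nakayamaLinearEquiv_mul hFrob x a

theorem apply_nakayama (a : R) : lam (nakayama hFrob a) = lam a := by
  simpa using (apply_mul_eq_apply_nakayama_mul hFrob 1 a).symm

theorem dualMap_mulRight_dualMap_mulLeft (r a : R) :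
    r ⇀ (lam ↼ a) = lam ↼ (nakayama hFrob r * a) := by
  ext x
  simp only [LinearMap.dualMap_apply, LinearMap.mulLeft_apply, LinearMap.mulRight_apply]
  rw [← mul_assoc, apply_mul_eq_apply_nakayama_mul hFrob _ r, mul_assoc]

end FrobeniusForm

namespace BalancedPairing

open FrobeniusForm

variable {K R : Type} [Field K] [Ring R] [Algebra K R]
  (p : Module.Dual K R →ₗ[K] Module.Dual K R →ₗ[K] R)

theorem span_range_eq_top
    (huniv : ∀ (M : Type) [AddCommGroup M] [Module K M]
      (b : Module.Dual K R →ₗ[K] Module.Dual K R →ₗ[K] M),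
      (∀ (r : R) (f g : Module.Dual K R), b (f ↼ r) g = b f (r ⇀ g)) →
      ∃! h : R →ₗ[K] M, ∀ f g : Module.Dual K R, b f g = h (p f g)) :
    Submodule.span K
      (Set.range fun fg : Module.Dual K R × Module.Dual K R => p fg.1 fg.2) = ⊤ := by
  set S := Submodule.span K (Set.range fun fg : Module.Dual K R × Module.Dual K R => p fg.1 fg.2)
  have hmem (f g : Module.Dual K R) : S.mkQ (p f g) = 0 :=
    (Submodule.Quotient.mk_eq_zero S).mpr (Submodule.subset_span ⟨(f, g), rfl⟩)
  obtain ⟨_, -, huniq⟩ := huniv (R ⧸ S) 0 fun _ _ _ => rfl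
  have hmkQ : S.mkQ = 0 :=
    (huniq S.mkQ fun f g => (hmem f g).symm).trans (huniq 0 fun _ _ => rfl).symm
  exact Submodule.eq_top_iff'.mpr fun x =>
    (Submodule.Quotient.mk_eq_zero S).mp (LinearMap.congr_fun hmkQ x)

/-- `p` induces a bimodule map `R* ⊗_R R* → R`. -/
structure IsBimoduleMap : Prop where
  balanced : ∀ (r : R) (f g : Module.Dual K R), p (f ↼ r) g = p f (r ⇀ g)
  map_left : ∀ (r : R) (f g : Module.Dual K R), p (r ⇀ f) g = r * p f g
  map_right : ∀ (f g : Module.Dual K R) (r : R), p f (g ↼ r) = p f g * r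

variable {p} [FiniteDimensional K R] {lam : Module.Dual K R}

theorem apply_dualMap_mulLeft (hFrob : Function.Bijective fun a : R => a ⇀ lam)
    (hp : IsBimoduleMap p) (a b : R) :
    p (lam ↼ a) (lam ↼ b) = p lam lam * (nakayama hFrob a * b) :=
  calc p (lam ↼ a) (lam ↼ b) = p lam (a ⇀ (lam ↼ b)) := hp.balanced a lam _
    _ = p lam (lam ↼ (nakayama hFrob a * b)) := by rw [dualMap_mulRight_dualMap_mulLeft]
    _ = p lam lam * (nakayama hFrob a * b) := hp.map_right lam lam _

theorem mul_apply_self (hFrob : Function.Bijective fun a : R => a ⇀ lam)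
    (hp : IsBimoduleMap p) (r : R) :
    r * p lam lam = p lam lam * nakayama hFrob (nakayama hFrob r) :=
  calc r * p lam lam = p (r ⇀ (lam ↼ 1)) (lam ↼ 1) := by
        rw [dualMap_mulLeft_one, hp.map_left]
    _ = p lam lam * nakayama hFrob (nakayama hFrob r) := by
        rw [dualMap_mulRight_dualMap_mulLeft, apply_dualMap_mulLeft hFrob hp, mul_one, mul_one]

theorem isLeftRegular_apply_self (hFrob : Function.Bijective fun a : R => a ⇀ lam)
    (hp : IsBimoduleMap p)
    (hspan : Submodule.span K
      (Set.range fun fg : Module.Dual K R × Module.Dual K R => p fg.1 fg.2) = ⊤) :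
    IsLeftRegular (p lam lam) := by
  have hsurj : LinearMap.range (LinearMap.mulLeft K (p lam lam)) = ⊤ := by
    refine top_le_iff.mp (hspan ▸ Submodule.span_le.mpr ?_)
    rintro _ ⟨⟨f, g⟩, rfl⟩
    obtain ⟨a, rfl⟩ := (dualMulLeft_bijective hFrob).2 f
    obtain ⟨b, rfl⟩ := (dualMulLeft_bijective hFrob).2 g
    exact ⟨nakayama hFrob a * b, (apply_dualMap_mulLeft hFrob hp a b).symm⟩
  exact LinearMap.injective_iff_surjective.mpr (LinearMap.range_eq_top.mp hsurj)

theorem nakayama_apply_self (hFrob : Function.Bijective fun a : R => a ⇀ lam)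
    (hp : IsBimoduleMap p)
    (hspan : Submodule.span K
      (Set.range fun fg : Module.Dual K R × Module.Dual K R => p fg.1 fg.2) = ⊤) :
    nakayama hFrob (p lam lam) = p lam lam := by
  have hsq := isLeftRegular_apply_self hFrob hp hspan (mul_apply_self hFrob hp (p lam lam)).symm
  set ν := nakayama hFrob
  set e := p lam lam
  refine eq_of_apply_mul_eq hFrob.2 fun x => ?_
  calc lam (ν e * x) = lam (e * ν (ν x)) := by
        rw [← apply_mul_eq_apply_nakayama_mul, mul_apply_self hFrob hp]
    _ = lam (e * x) := by
        rw [← hsq, ← map_mul, ← map_mul, apply_nakayama, apply_nakayama, hsq]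

theorem assoc (hFrob : Function.Bijective fun a : R => a ⇀ lam) (hp : IsBimoduleMap p)
    (hspan : Submodule.span K
      (Set.range fun fg : Module.Dual K R × Module.Dual K R => p fg.1 fg.2) = ⊤)
    (f g h : Module.Dual K R) (s : R) : h (s * p f g) = f (p g h * s) := by
  obtain ⟨a, rfl⟩ := (dualMulLeft_bijective hFrob).2 f
  obtain ⟨b, rfl⟩ := (dualMulLeft_bijective hFrob).2 g
  obtain ⟨c, rfl⟩ := (dualMulLeft_bijective hFrob).2 h
  have hrot := apply_mul_eq_apply_nakayama_mul hFrob
  have hfix := nakayama_apply_self hFrob hp hspan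
  have hcomm := mul_apply_self hFrob hp a
  simp only [dualMulLeft_apply, apply_dualMap_mulLeft hFrob hp, LinearMap.dualMap_apply,
    LinearMap.mulLeft_apply]
  set ν := nakayama hFrob
  set e := p lam lam
  calc lam (c * (s * (e * (ν a * b)))) = lam ((c * s * e * ν a) * b) := by simp only [mul_assoc]
    _ = lam ((ν b * c * s * e) * ν a) := by rw [hrot]; simp only [mul_assoc]
    _ = lam ((ν (ν a) * (ν b * c * s)) * e) := by rw [hrot]; simp only [mul_assoc]
    _ = lam ((e * ν (ν a)) * (ν b * c * s)) := by rw [hrot, hfix]; simp only [mul_assoc]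
    _ = lam (a * (e * (ν b * c) * s)) := by rw [← hcomm]; simp only [mul_assoc]

end BalancedPairing

namespace LinearMap

variable {K R : Type*} [CommSemiring K] [Semiring R] [Algebra K R] {S : Set R} {e : R →ₗ[K] R}

theorem apply_eq_mul_apply_one_of_span_eq_top (hS : Submodule.span K S = ⊤)
    (he : ∀ r, ∀ s ∈ S, e (r * s) = r * e s) (x : R) : e x = x * e 1 := by
  have hcomm : e ∘ₗ mulLeft K x = mulLeft K x ∘ₗ e := ext_on hS fun s hs => he x s hs
  simpa using LinearMap.congr_fun hcomm 1

theorem apply_eq_apply_one_mul_of_span_eq_top (hS : Submodule.span K S = ⊤)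
    (he : ∀ r, ∀ s ∈ S, e (s * r) = e s * r) (x : R) : e x = e 1 * x := by
  have hcomm : e ∘ₗ mulRight K x = mulRight K x ∘ₗ e := ext_on hS fun s hs => he x s hs
  simpa using LinearMap.congr_fun hcomm 1

end LinearMap

/-- Let `R` be a Frobenius algebra (there is a Frobenius form `lam`, i.e.
`a ↦ a ⇀ lam` is bijective) such that `R* ⊗_R R* ≅ R` as `R`-bimodules — equivalently
`[R*]` has order at most 2 in `Pic(R)`. The isomorphism is encoded by a balanced
bilinear pairing `p₀` which is a morphism of left and right modules and satisfies the
universal property of the tensor product. Then every `R`-bimodule isomorphism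
`ψ : R* ⊗_R R* → R` is associative: `p₀` itself is associative, and so is `e ∘ p₀` for
every bijective linear `e : R → R` compatible with the bimodule structure (every
bimodule isomorphism arises this way). Here `(a ⇀ f)(s) = f (s * a)`,
`(f ↼ a)(s) = f (a * s)`. -/
theorem stmt16 (K R : Type) [Field K] [Ring R] [Algebra K R] [FiniteDimensional K R]
    (lam : Module.Dual K R)
    (hFrob : Function.Bijective fun a : R => (LinearMap.mulRight K a).dualMap lam)
    (p₀ : Module.Dual K R →ₗ[K] Module.Dual K R →ₗ[K] R)
    (hbal : ∀ (r : R) (f g : Module.Dual K R),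
      p₀ ((LinearMap.mulLeft K r).dualMap f) g = p₀ f ((LinearMap.mulRight K r).dualMap g))
    (hleft : ∀ (r : R) (f g : Module.Dual K R),
      p₀ ((LinearMap.mulRight K r).dualMap f) g = r * p₀ f g)
    (hright : ∀ (f g : Module.Dual K R) (r : R),
      p₀ f ((LinearMap.mulLeft K r).dualMap g) = p₀ f g * r)
    (huniv : ∀ (M : Type) [AddCommGroup M] [Module K M]
        (b : Module.Dual K R →ₗ[K] Module.Dual K R →ₗ[K] M),
        (∀ (r : R) (f g : Module.Dual K R),
          b ((LinearMap.mulLeft K r).dualMap f) g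
            = b f ((LinearMap.mulRight K r).dualMap g)) →
        ∃! h : R →ₗ[K] M, ∀ f g : Module.Dual K R, b f g = h (p₀ f g)) :
    (∀ (f g h : Module.Dual K R) (s : R), h (s * p₀ f g) = f (p₀ g h * s)) ∧
    (∀ e : R →ₗ[K] R, Function.Bijective e →
      (∀ (r : R) (f g : Module.Dual K R), e (r * p₀ f g) = r * e (p₀ f g)) →
      (∀ (f g : Module.Dual K R) (r : R), e (p₀ f g * r) = e (p₀ f g) * r) →
      ∀ (f g h : Module.Dual K R) (s : R),
        h (s * e (p₀ f g)) = f (e (p₀ g h) * s)) := by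
  have hspan := BalancedPairing.span_range_eq_top p₀ huniv
  have hassoc := BalancedPairing.assoc hFrob ⟨hbal, hleft, hright⟩ hspan
  refine ⟨hassoc, fun e _ hel her f g h s => ?_⟩
  have he_mul_one := LinearMap.apply_eq_mul_apply_one_of_span_eq_top hspan
    (by rintro r _ ⟨⟨f, g⟩, rfl⟩; exact hel r f g)
  have he_one_mul := LinearMap.apply_eq_apply_one_mul_of_span_eq_top hspan
    (by rintro r _ ⟨⟨f, g⟩, rfl⟩; exact her f g r)
  calc h (s * e (p₀ f g)) = h ((s * e 1) * p₀ f g) := by rw [he_one_mul, mul_assoc]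
    _ = f (p₀ g h * (s * e 1)) := hassoc f g h _
    _ = f (e (p₀ g h) * s) := by
        rw [he_mul_one (p₀ g h), mul_assoc, ← he_one_mul, he_mul_one s]
end
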